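/- Let P(Z) = A_0 Z^n + A_1 Z^{n-1} + ... + A_n be a polynomial of degree n ≥ 1 with d×d circulant matrix coefficients, where A_0 is invertible (P is regular). Then the equation P(Z) = O has at least one and at most n^d solutions Z among d×d circulant matrices with complex entries. -/

import Mathlib

/-!
Let `W = (ω^{jk})` be the DFT matrix of a primitive `d`-th root of unity `ω`. Every circulant
matrix is diagonalized by `W`: `circ x * W = W * diagonal (W *ᵥ x)`. Conjugating by `W` therefore
turns `P(circ z) = 0` into the `d` scalar equations `p_j((W *ᵥ z)_j) = 0`, where `p_j` has the
coefficients `(W *ᵥ A_k)_j`. Since `circ A_0` is invertible, every leading coefficient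
`(W *ᵥ A_0)_j` is nonzero, so each `p_j` has degree `n` and between `1` and `n` roots. The solutions
are the images of the at most `n^d` choices of one root of each `p_j` under `f ↦ circ (W⁻¹ *ᵥ f)`.
-/

/-- The `d × d` circulant matrix with first row `x`. -/
def circ {d : ℕ} (x : Fin d → ℂ) : Matrix (Fin d) (Fin d) ℂ :=
  Matrix.of fun i j => x (j - i)

open Matrix Polynomial Finset

lemma SemiconjBy.finset_sum_right {R ι : Type*} [NonUnitalNonAssocSemiring R] {a : R}
    {s : Finset ι} {x y : ι → R} (h : ∀ i ∈ s, SemiconjBy a (x i) (y i)) :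
    SemiconjBy a (∑ i ∈ s, x i) (∑ i ∈ s, y i) := by
  simp only [SemiconjBy, Finset.mul_sum, Finset.sum_mul]
  exact Finset.sum_congr rfl h

section DescendingPoly

variable {R : Type*} [CommRing R]

noncomputable def descendingPoly (c : ℕ → R) (n : ℕ) : R[X] :=
  ∑ k ∈ range (n + 1), C (c k) * X ^ (n - k)

lemma eval_descendingPoly (c : ℕ → R) (n : ℕ) (w : R) :
    (descendingPoly c n).eval w = ∑ k ∈ range (n + 1), c k * w ^ (n - k) := by
  simp [descendingPoly, eval_finsetSum]

lemma natDegree_descendingPoly {c : ℕ → R} (hc : c 0 ≠ 0) (n : ℕ) :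
    (descendingPoly c n).natDegree = n := by
  refine natDegree_eq_of_le_of_coeff_ne_zero ?_ ?_
  · exact natDegree_sum_le_of_forall_le _ _ fun k _ =>
      (natDegree_C_mul_X_pow_le _ _).trans (Nat.sub_le n k)
  · rw [descendingPoly, finsetSum_coeff, Finset.sum_eq_single 0]
    · simpa using hc
    · intro k hk hk0
      rw [coeff_C_mul_X_pow, if_neg (by simp at hk; omega)]
    · simp

end DescendingPoly

lemma roots_toFinset_nonempty_of_natDegree_pos {K : Type*} [Field K] [IsAlgClosed K]
    [DecidableEq K] {p : K[X]} (hp : 0 < p.natDegree) : p.roots.toFinset.Nonempty := by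
  have hp0 := ne_zero_of_natDegree_gt hp
  obtain ⟨w, hw⟩ := IsAlgClosed.exists_root p (by rw [degree_eq_natDegree hp0]; norm_cast; omega)
  exact ⟨w, Multiset.mem_toFinset.2 ((mem_roots hp0).2 hw)⟩

lemma card_roots_toFinset_le_natDegree {R : Type*} [CommRing R] [IsDomain R] [DecidableEq R]
    (p : R[X]) : p.roots.toFinset.card ≤ p.natDegree :=
  (Multiset.toFinset_card_le _).trans (card_roots' p)

lemma setOf_forall_isRoot_eq_piFinset {ι R : Type*} [Fintype ι] [DecidableEq ι] [CommRing R]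
    [IsDomain R] [DecidableEq R] {p : ι → R[X]} (hp : ∀ i, p i ≠ 0) :
    {f : ι → R | ∀ i, (p i).IsRoot (f i)} = ↑(Fintype.piFinset fun i => (p i).roots.toFinset) := by
  ext f
  simp [mem_roots (hp _)]

section DFT

variable {d : ℕ} {ω : ℂ}

def dft (ω : ℂ) : Matrix (Fin d) (Fin d) ℂ :=
  of fun j k => ω ^ ((j : ℕ) * k)

lemma dft_mulVec_apply (x : Fin d → ℂ) (j : Fin d) :
    (dft ω *ᵥ x) j = ∑ k : Fin d, ω ^ ((j : ℕ) * (k : ℕ)) * x k :=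
  rfl

lemma isUnit_dft (hω : IsPrimitiveRoot ω d) : IsUnit (dft ω : Matrix (Fin d) (Fin d) ℂ) := by
  have hW : dft ω = vandermonde fun i : Fin d => ω ^ (i : ℕ) := by
    ext j k
    simp [dft, vandermonde_apply, pow_mul]
  rw [isUnit_iff_isUnit_det, hW, isUnit_iff_ne_zero, det_vandermonde_ne_zero_iff]
  exact fun i j h => Fin.ext (hω.pow_inj i.isLt j.isLt h)

lemma pow_val_add_mul (hω : ω ^ d = 1) (a b : Fin d) (j : ℕ) :
    ω ^ ((a + b : Fin d) * j) = ω ^ ((a : ℕ) * j) * ω ^ ((b : ℕ) * j) := by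
  have hmod : ∀ m, ω ^ (m % d) = ω ^ m := fun m => by
    conv_rhs => rw [← Nat.mod_add_div m d, pow_add, pow_mul, hω, one_pow, mul_one]
  rw [Fin.val_add, pow_mul, hmod, ← pow_mul, add_mul, pow_add]

variable [NeZero d]

lemma circ_mul_dft (hω : ω ^ d = 1) (x : Fin d → ℂ) :
    circ x * dft ω = dft ω * diagonal (dft ω *ᵥ x) := by
  ext i j
  rw [mul_diagonal, dft_mulVec_apply, Finset.mul_sum, mul_apply]
  refine (Fintype.sum_equiv (Equiv.addLeft i) _ _ fun k => ?_).symm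
  simp only [circ, dft, of_apply, Equiv.coe_addLeft, add_sub_cancel_left]
  rw [pow_val_add_mul hω, mul_comm (j : ℕ) k]
  ring

lemma dft_mulVec_apply_ne_zero (hω : IsPrimitiveRoot ω d) {x : Fin d → ℂ}
    (hx : IsUnit (circ x)) (j : Fin d) : (dft ω *ᵥ x) j ≠ 0 := by
  have hW := ((isUnit_iff_isUnit_det _).1 (isUnit_dft hω)).ne_zero
  have hdet := congrArg det (circ_mul_dft hω.pow_eq_one x)
  rw [det_mul, det_mul, det_diagonal, mul_comm, mul_right_inj' hW] at hdet
  exact Finset.prod_ne_zero_iff.1 (hdet ▸ ((isUnit_iff_isUnit_det _).1 hx).ne_zero) j (mem_univ j)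

lemma sum_circ_mul_circ_pow_eq_zero_iff (hω : IsPrimitiveRoot ω d) {ι : Type*} (s : Finset ι)
    (a : ι → Fin d → ℂ) (e : ι → ℕ) (z : Fin d → ℂ) :
    ∑ k ∈ s, circ (a k) * circ z ^ e k = 0 ↔
      ∑ k ∈ s, (dft ω *ᵥ a k) * (dft ω *ᵥ z) ^ e k = 0 := by
  have hsemi : SemiconjBy (dft ω) (diagonal (∑ k ∈ s, (dft ω *ᵥ a k) * (dft ω *ᵥ z) ^ e k))
      (∑ k ∈ s, circ (a k) * circ z ^ e k) := by
    have hdiag := map_sum (diagonalRingHom (Fin d) ℂ)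
      (fun k => (dft ω *ᵥ a k) * (dft ω *ᵥ z) ^ e k) s
    simp only [map_mul, map_pow, diagonalRingHom_apply] at hdiag
    rw [hdiag]
    exact SemiconjBy.finset_sum_right fun k _ =>
      SemiconjBy.mul_right (circ_mul_dft hω.pow_eq_one _).symm
        (SemiconjBy.pow_right (circ_mul_dft hω.pow_eq_one z).symm _)
  rw [← (isUnit_dft hω).mul_left_eq_zero, ← hsemi.eq, (isUnit_dft hω).mul_right_eq_zero,
    diagonal_eq_zero]

lemma setOf_circ_solutions_eq_image (hω : IsPrimitiveRoot ω d) (A : ℕ → Fin d → ℂ) (n : ℕ) :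
    {Z : Matrix (Fin d) (Fin d) ℂ | (∃ z : Fin d → ℂ, Z = circ z) ∧
        ∑ k ∈ range (n + 1), circ (A k) * Z ^ (n - k) = 0} =
      (fun f => circ ((dft ω)⁻¹ *ᵥ f)) ''
        {f | ∀ j, (descendingPoly (fun k => (dft ω *ᵥ A k) j) n).IsRoot (f j)} := by
  have hdet := (isUnit_iff_isUnit_det _).1 (isUnit_dft (d := d) hω)
  have hsolution : ∀ z, ∑ k ∈ range (n + 1), circ (A k) * circ z ^ (n - k) = 0 ↔
      ∀ j, (descendingPoly (fun k => (dft ω *ᵥ A k) j) n).IsRoot ((dft ω *ᵥ z) j) := fun z => by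
    rw [sum_circ_mul_circ_pow_eq_zero_iff hω, funext_iff]
    simp [IsRoot, eval_descendingPoly, Finset.sum_apply]
  ext Z
  constructor
  · rintro ⟨⟨z, rfl⟩, hZ⟩
    refine ⟨dft ω *ᵥ z, (hsolution z).1 hZ, ?_⟩
    simp only [mulVec_mulVec, nonsing_inv_mul _ hdet, one_mulVec]
  · rintro ⟨f, hf, rfl⟩
    refine ⟨⟨_, rfl⟩, (hsolution _).2 ?_⟩
    rwa [mulVec_mulVec, mul_nonsing_inv _ hdet, one_mulVec]

end DFT

/-- FTA for regular circulant polynomial equations: `P(Z) = O` with invertible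
leading coefficient has at least one and at most `n^d` circulant solutions. -/
theorem regular_poly_solutions (d n : ℕ) (hd : 2 ≤ d) (hn : 1 ≤ n)
    (A : ℕ → Fin d → ℂ) (hreg : IsUnit (circ (A 0))) :
    {Z : Matrix (Fin d) (Fin d) ℂ | (∃ z : Fin d → ℂ, Z = circ z) ∧
        ∑ k ∈ Finset.range (n + 1), circ (A k) * Z ^ (n - k) = 0}.Finite ∧
    {Z : Matrix (Fin d) (Fin d) ℂ | (∃ z : Fin d → ℂ, Z = circ z) ∧
        ∑ k ∈ Finset.range (n + 1), circ (A k) * Z ^ (n - k) = 0}.Nonempty ∧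
    {Z : Matrix (Fin d) (Fin d) ℂ | (∃ z : Fin d → ℂ, Z = circ z) ∧
        ∑ k ∈ Finset.range (n + 1), circ (A k) * Z ^ (n - k) = 0}.ncard ≤ n ^ d := by
  have : NeZero d := ⟨by omega⟩
  obtain ⟨ω, hω⟩ : ∃ ω : ℂ, IsPrimitiveRoot ω d := ⟨_, Complex.isPrimitiveRoot_exp d (NeZero.ne d)⟩
  set p : Fin d → ℂ[X] := fun j => descendingPoly (fun k => (dft ω *ᵥ A k) j) n
  have hdeg : ∀ j, (p j).natDegree = n := fun j =>
    natDegree_descendingPoly (dft_mulVec_apply_ne_zero hω hreg j) n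
  have hp0 : ∀ j, p j ≠ 0 := fun j => ne_zero_of_natDegree_gt (hdeg j ▸ hn)
  rw [setOf_circ_solutions_eq_image hω, setOf_forall_isRoot_eq_piFinset hp0]
  refine ⟨(Finset.finite_toSet _).image _, ?_, ?_⟩
  · exact (Finset.coe_nonempty.2 (Fintype.piFinset_nonempty.2 fun j =>
      roots_toFinset_nonempty_of_natDegree_pos (hdeg j ▸ hn))).image _
  · calc _ ≤ (Fintype.piFinset fun j => (p j).roots.toFinset).card :=
          (Set.ncard_image_le (Finset.finite_toSet _)).trans (Set.ncard_coe_finset _).le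
      _ = ∏ j, (p j).roots.toFinset.card := Fintype.card_piFinset _
      _ ≤ n ^ d := by
          simpa using Finset.prod_le_pow_card univ _ n fun j _ =>
            (card_roots_toFinset_le_natDegree (p j)).trans (hdeg j).le
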